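/- In Urysohn's example X = (ℕ × ℤ) ∪ {+∞, −∞} (with the topology described), letting B = {(n, m) : n ∈ ℕ, m > 0}, the θ-closure of B is B ∪ {(n,0) : n ∈ ℕ} ∪ {+∞}, while the θ-closure of cl_θ B additionally contains −∞; hence the θ-closure operator is not idempotent. -/

import Mathlib

/-- The underlying set of Urysohn's example: `ℕ × ℤ` together with `+∞` and `-∞`. -/
inductive Ury where
  | pt : ℕ → ℤ → Ury
  | pinf : Ury
  | ninf : Ury

namespace Ury

/-- Open sets in Urysohn's example. -/
def uryOpen (U : Set Ury) : Prop :=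
  (pinf ∈ U → ∃ k : ℕ, ∀ n > k, ∀ m : ℤ, 0 < m → pt n m ∈ U) ∧
  (ninf ∈ U → ∃ k : ℕ, ∀ n > k, ∀ m : ℤ, m < 0 → pt n m ∈ U) ∧
  (∀ n : ℕ, pt n 0 ∈ U → ∃ k : ℕ, ∀ m : ℤ, (k : ℤ) < |m| → pt n m ∈ U)

instance : TopologicalSpace Ury where
  IsOpen := uryOpen
  isOpen_univ := ⟨fun _ => ⟨0, fun _ _ _ _ => trivial⟩, fun _ => ⟨0, fun _ _ _ _ => trivial⟩,
    fun _ _ => ⟨0, fun _ _ => trivial⟩⟩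
  isOpen_inter := by
    rintro U V ⟨hU1, hU2, hU3⟩ ⟨hV1, hV2, hV3⟩
    refine ⟨?_, ?_, ?_⟩
    · rintro ⟨h1, h2⟩
      obtain ⟨k1, hk1⟩ := hU1 h1
      obtain ⟨k2, hk2⟩ := hV1 h2
      exact ⟨max k1 k2, fun n hn m hm =>
        ⟨hk1 n (lt_of_le_of_lt (le_max_left _ _) hn) m hm,
         hk2 n (lt_of_le_of_lt (le_max_right _ _) hn) m hm⟩⟩
    · rintro ⟨h1, h2⟩
      obtain ⟨k1, hk1⟩ := hU2 h1
      obtain ⟨k2, hk2⟩ := hV2 h2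
      exact ⟨max k1 k2, fun n hn m hm =>
        ⟨hk1 n (lt_of_le_of_lt (le_max_left _ _) hn) m hm,
         hk2 n (lt_of_le_of_lt (le_max_right _ _) hn) m hm⟩⟩
    · rintro n ⟨h1, h2⟩
      obtain ⟨k1, hk1⟩ := hU3 n h1
      obtain ⟨k2, hk2⟩ := hV3 n h2
      refine ⟨max k1 k2, fun m hm => ?_⟩
      push_cast at hm
      exact ⟨hk1 m (lt_of_le_of_lt (by exact_mod_cast le_max_left k1 k2) hm),
             hk2 m (lt_of_le_of_lt (by exact_mod_cast le_max_right k1 k2) hm)⟩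
  isOpen_sUnion := by
    intro S hS
    refine ⟨?_, ?_, ?_⟩
    · rintro ⟨t, ht, hmem⟩
      obtain ⟨k, hk⟩ := (hS t ht).1 hmem
      exact ⟨k, fun n hn m hm => ⟨t, ht, hk n hn m hm⟩⟩
    · rintro ⟨t, ht, hmem⟩
      obtain ⟨k, hk⟩ := (hS t ht).2.1 hmem
      exact ⟨k, fun n hn m hm => ⟨t, ht, hk n hn m hm⟩⟩
    · rintro n ⟨t, ht, hmem⟩
      obtain ⟨k, hk⟩ := (hS t ht).2.2 n hmem
      exact ⟨k, fun m hm => ⟨t, ht, hk m hm⟩⟩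

/-- The H-set `A = {(n,0) : n ∈ ℕ} ∪ {+∞}`. -/
def A : Set Ury := {x | (∃ n : ℕ, x = pt n 0) ∨ x = pinf}

/-- `B = {(n,m) : m > 0}`. -/
def B : Set Ury := {x | ∃ n : ℕ, ∃ m : ℤ, 0 < m ∧ x = pt n m}

end Ury

/-- The θ-closure of a set in a topological space. -/
def thetaCl {Z : Type*} [TopologicalSpace Z] (S : Set Z) : Set Z :=
  {x | ∀ U : Set Z, IsOpen U → x ∈ U → (closure U ∩ S).Nonempty}

/-!
The points `(n,m)` with `m ≠ 0` are isolated and `Ury` is T₁, so such a point lies in a θ-closure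
only if it lies in the set itself. `B` is open and disjoint from the open lower half
`{-∞} ∪ {(n,m) : m < 0}`, so `-∞ ∉ cl_θ B`, while `+∞` and the points `(n,0)` are in the closure
of `B`. On the other hand, every neighbourhood of `-∞` contains the negative tail of some
column `n`, so its closure contains `(n,0) ∈ cl_θ B`, whence `-∞ ∈ cl_θ (cl_θ B)`.
-/

section ThetaClosure

variable {Z : Type*} [TopologicalSpace Z] {S : Set Z}

lemma closure_subset_thetaCl (S : Set Z) : closure S ⊆ thetaCl S := fun _ hx U hU hxU =>
  (mem_closure_iff.1 hx U hU hxU).mono (Set.inter_subset_inter_left S subset_closure)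

lemma subset_thetaCl (S : Set Z) : S ⊆ thetaCl S :=
  subset_closure.trans (closure_subset_thetaCl S)

lemma notMem_thetaCl_of_disjoint {x : Z} {U V : Set Z} (hU : IsOpen U) (hxU : x ∈ U)
    (hV : IsOpen V) (hSV : S ⊆ V) (hUV : Disjoint U V) : x ∉ thetaCl S := fun hx =>
  (hx U hU hxU).ne_empty <| ((hUV.closure_left hV).mono_right hSV).inter_eq

lemma mem_thetaCl_iff_of_isOpen_singleton [T1Space Z] {y : Z} (hy : IsOpen {y}) :
    y ∈ thetaCl S ↔ y ∈ S := by
  refine ⟨fun h => ?_, fun h => subset_thetaCl S h⟩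
  obtain ⟨z, hz, hzS⟩ := h {y} hy rfl
  rw [closure_singleton, Set.mem_singleton_iff] at hz
  exact hz ▸ hzS

end ThetaClosure

namespace Ury

lemma isOpen_iff {U : Set Ury} : IsOpen U ↔ uryOpen U := Iff.rfl

lemma isOpen_singleton_pt {n : ℕ} {m : ℤ} (hm : m ≠ 0) : IsOpen ({pt n m} : Set Ury) :=
  isOpen_iff.2 ⟨fun h => (nomatch h), fun h => (nomatch h), fun _ h => absurd (pt.inj h).2.symm hm⟩

instance : T1Space Ury where
  t1 x := by
    rw [← isOpen_compl_iff, isOpen_iff]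
    cases x with
    | pt a b =>
      refine ⟨fun _ => ⟨a, fun n hn m _ h => ?_⟩, fun _ => ⟨a, fun n hn m _ h => ?_⟩,
        fun n _ => ⟨b.natAbs, fun m hm h => ?_⟩⟩
      · exact hn.ne' (pt.inj h).1
      · exact hn.ne' (pt.inj h).1
      · rw [(pt.inj h).2, Int.natCast_natAbs] at hm
        exact lt_irrefl _ hm
    | pinf => exact ⟨fun h => absurd rfl h, fun _ => ⟨0, fun _ _ _ _ h => nomatch h⟩,
        fun _ _ => ⟨0, fun _ _ h => nomatch h⟩⟩
    | ninf => exact ⟨fun _ => ⟨0, fun _ _ _ _ h => nomatch h⟩, fun h => absurd rfl h,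
        fun _ _ => ⟨0, fun _ _ h => nomatch h⟩⟩

lemma pt_zero_mem_closure {n : ℕ} {U : Set Ury} (hU : ∀ k : ℕ, ∃ m : ℤ, k < |m| ∧ pt n m ∈ U) :
    pt n 0 ∈ closure U := by
  refine mem_closure_iff.2 fun V hV hnV => ?_
  obtain ⟨k, hk⟩ := hV.2.2 n hnV
  obtain ⟨m, hkm, hmU⟩ := hU k
  exact ⟨pt n m, hk m hkm, hmU⟩

lemma isOpen_B : IsOpen B :=
  isOpen_iff.2 ⟨fun h => (nomatch h), fun h => (nomatch h),
    fun _ ⟨_, _, hm, h⟩ => (hm.ne (pt.inj h).2).elim⟩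

lemma pt_zero_mem_closure_B (n : ℕ) : pt n 0 ∈ closure B :=
  pt_zero_mem_closure fun k => ⟨k + 1, by rw [abs_of_pos (by positivity)]; omega,
    n, k + 1, by positivity, rfl⟩

lemma pinf_mem_closure_B : pinf ∈ closure B := by
  refine mem_closure_iff.2 fun V hV hV' => ?_
  obtain ⟨k, hk⟩ := hV.1 hV'
  exact ⟨pt (k + 1) 1, hk (k + 1) (by omega) 1 one_pos, k + 1, 1, one_pos, rfl⟩

def lowerHalf : Set Ury := {x | x = ninf ∨ ∃ n : ℕ, ∃ m : ℤ, m < 0 ∧ x = pt n m}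

lemma isOpen_lowerHalf : IsOpen lowerHalf := by
  refine isOpen_iff.2 ⟨fun h => ?_, fun _ => ⟨0, fun n _ m hm => Or.inr ⟨n, m, hm, rfl⟩⟩,
    fun n h => ?_⟩
  · obtain h | ⟨_, _, _, h⟩ := h <;> cases h
  · obtain h | ⟨_, _, hm, h⟩ := h
    · cases h
    · exact (hm.ne (pt.inj h).2.symm).elim

lemma disjoint_lowerHalf_B : Disjoint lowerHalf B := by
  refine Set.disjoint_left.2 fun x hxL ⟨n, m, hm, hx⟩ => ?_
  obtain rfl | ⟨n', m', hm', rfl⟩ := hxL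
  · cases hx
  · obtain ⟨-, rfl⟩ := pt.inj hx
    omega

lemma ninf_notMem_thetaCl_B : ninf ∉ thetaCl B :=
  notMem_thetaCl_of_disjoint isOpen_lowerHalf (Or.inl rfl) isOpen_B le_rfl disjoint_lowerHalf_B

lemma pt_neg_notMem_thetaCl_B {n : ℕ} {m : ℤ} (hm : m < 0) : pt n m ∉ thetaCl B := by
  rw [mem_thetaCl_iff_of_isOpen_singleton (isOpen_singleton_pt hm.ne)]
  rintro ⟨_, _, hm', h⟩
  obtain ⟨-, rfl⟩ := pt.inj h
  omega

lemma thetaCl_B_eq : thetaCl B = B ∪ {x | ∃ n : ℕ, x = pt n 0} ∪ {pinf} := by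
  refine subset_antisymm (fun x hx => ?_) (Set.union_subset (Set.union_subset ?_ ?_) ?_)
  · cases x with
    | pt n m =>
      rcases lt_trichotomy m 0 with hm | rfl | hm
      · exact absurd hx (pt_neg_notMem_thetaCl_B hm)
      · exact Or.inl (Or.inr ⟨n, rfl⟩)
      · exact Or.inl (Or.inl ⟨n, m, hm, rfl⟩)
    | pinf => exact Or.inr rfl
    | ninf => exact absurd hx ninf_notMem_thetaCl_B
  · exact subset_thetaCl B
  · rintro _ ⟨n, rfl⟩
    exact closure_subset_thetaCl B (pt_zero_mem_closure_B n)
  · rintro _ rfl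
    exact closure_subset_thetaCl B pinf_mem_closure_B

lemma ninf_mem_thetaCl_thetaCl_B : ninf ∈ thetaCl (thetaCl B) := by
  intro U hU hU'
  obtain ⟨k, hk⟩ := hU.2.1 hU'
  refine ⟨pt (k + 1) 0, pt_zero_mem_closure fun j => ⟨-(j + 1), ?_, hk (k + 1) (by omega) _ ?_⟩,
    closure_subset_thetaCl B (pt_zero_mem_closure_B (k + 1))⟩
  · rw [abs_neg, abs_of_pos (by positivity)]
    omega
  · omega

lemma thetaCl_thetaCl_B_eq : thetaCl (thetaCl B) = thetaCl B ∪ {ninf} := by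
  refine subset_antisymm (fun x hx => ?_) (Set.union_subset (subset_thetaCl _) ?_)
  · rcases x with ⟨n, m⟩ | _ | _
    · rcases lt_trichotomy m 0 with hm | rfl | hm
      · rw [mem_thetaCl_iff_of_isOpen_singleton (isOpen_singleton_pt hm.ne)] at hx
        exact absurd hx (pt_neg_notMem_thetaCl_B hm)
      · exact Or.inl (closure_subset_thetaCl B (pt_zero_mem_closure_B n))
      · exact Or.inl (subset_thetaCl B ⟨n, m, hm, rfl⟩)
    · exact Or.inl (closure_subset_thetaCl B pinf_mem_closure_B)
    · exact Or.inr rfl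
  · rintro _ rfl
    exact ninf_mem_thetaCl_thetaCl_B

end Ury

open Ury in
/-- In Urysohn's example, with `B = {(n,m) : m > 0}`:
`cl_θ B = B ∪ {(n,0)} ∪ {+∞}`, while `cl_θ (cl_θ B) = cl_θ B ∪ {-∞}`;
hence the θ-closure operator is not idempotent. -/
theorem ury_thetaCl_not_idempotent :
    thetaCl Ury.B = Ury.B ∪ {x | ∃ n : ℕ, x = pt n 0} ∪ {pinf} ∧
    thetaCl (thetaCl Ury.B) = thetaCl Ury.B ∪ {ninf} ∧
    thetaCl (thetaCl Ury.B) ≠ thetaCl Ury.B :=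
  ⟨thetaCl_B_eq, thetaCl_thetaCl_B_eq, fun h =>
    ninf_notMem_thetaCl_B (h ▸ ninf_mem_thetaCl_thetaCl_B)⟩
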